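/- Let G be a connected simple graph, let v ≠ w be vertices, and let c₁ ≠ c₂ be two vertices, both distinct from v and w, each of which separates v from w in G (i.e., v and w are disconnected both in G with c₁ deleted and in G with c₂ deleted). Then every path from v to w in G contains both c₁ and c₂, and either on every such path c₁ occurs before c₂ (in the order of traversal starting from v), or on every such path c₂ occurs before c₁. -/

import Mathlib

/-- The graph obtained from `H` by deleting the vertex `c` and all edges incident to it
(keeping the same vertex type). -/
def removeVertex {V : Type*} (H : SimpleGraph V) (c : V) : SimpleGraph V where
  Adj a b := H.Adj a b ∧ a ≠ c ∧ b ≠ c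
  symm := by
    refine ⟨?_⟩
    intro a b h
    exact ⟨h.1.symm, h.2.2, h.2.1⟩
  loopless := by
    refine ⟨?_⟩
    intro a h
    exact H.loopless.irrefl a h.1

theorem List.Nodup.mem_drop_iff_le_idxOf {α : Type*} [DecidableEq α] {l : List α}
    (hl : l.Nodup) {a : α} (ha : a ∈ l) (n : ℕ) : a ∈ l.drop n ↔ n ≤ l.idxOf a := by
  rw [← not_lt, ← List.mem_take_iff_idxOf_lt ha]
  refine ⟨fun hd ht => List.disjoint_take_drop hl le_rfl ht hd, fun ht => ?_⟩
  rw [← List.take_append_drop n l, List.mem_append] at ha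
  exact ha.resolve_left ht

namespace SimpleGraph.Walk

variable {V : Type*} {G : SimpleGraph V}

theorem reachable_removeVertex_of_notMem_support {a b c : V} (p : G.Walk a b)
    (hc : c ∉ p.support) : (removeVertex G c).Reachable a b := by
  refine (p.transfer (removeVertex G c) fun e he => ?_).reachable
  induction e using Sym2.ind with
  | h x y =>
    exact ⟨p.adj_of_mem_edges he, fun hx => hc (hx ▸ p.fst_mem_support_of_mem_edges he),
      fun hy => hc (hy ▸ p.snd_mem_support_of_mem_edges he)⟩

variable [DecidableEq V] {u v w x : V}

theorem mem_support_takeUntil_iff (p : G.Walk u v) (hw : w ∈ p.support)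
    (hx : x ∈ p.support) :
    x ∈ (p.takeUntil w hw).support ↔ p.support.idxOf x ≤ p.support.idxOf w := by
  rw [p.takeUntil_eq_take hw, support_copy, support_take,
    List.mem_take_iff_idxOf_lt hx, Nat.lt_succ_iff]

theorem IsPath.mem_support_dropUntil_iff {p : G.Walk u v} (hp : p.IsPath)
    (hw : w ∈ p.support) (hx : x ∈ p.support) :
    x ∈ (p.dropUntil w hw).support ↔ p.support.idxOf w ≤ p.support.idxOf x := by
  have hw_le : p.support.idxOf w ≤ p.length :=
    p.length_takeUntil hw ▸ p.length_takeUntil_le_length hw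
  rw [p.dropUntil_eq_drop hw, support_copy, drop_support_eq_support_drop_min,
    min_eq_left hw_le, hp.support_nodup.mem_drop_iff_le_idxOf hx]

end SimpleGraph.Walk

open SimpleGraph

theorem separators_linearly_ordered_general {V : Type*} [DecidableEq V] (G : SimpleGraph V)
    (v w c₁ c₂ : V) (hc : c₁ ≠ c₂)
    (hsep1 : ¬ (removeVertex G c₁).Reachable v w)
    (hsep2 : ¬ (removeVertex G c₂).Reachable v w) :
    (∀ P : G.Path v w, c₁ ∈ P.1.support ∧ c₂ ∈ P.1.support) ∧
    ((∀ P : G.Path v w, P.1.support.idxOf c₁ < P.1.support.idxOf c₂) ∨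
     (∀ P : G.Path v w, P.1.support.idxOf c₂ < P.1.support.idxOf c₁)) := by
  have hmem (P : G.Path v w) : c₁ ∈ P.1.support ∧ c₂ ∈ P.1.support :=
    ⟨hsep1.imp_symm P.1.reachable_removeVertex_of_notMem_support,
      hsep2.imp_symm P.1.reachable_removeVertex_of_notMem_support⟩
  have hne (P : G.Path v w) : P.1.support.idxOf c₁ ≠ P.1.support.idxOf c₂ :=
    fun h => hc ((List.idxOf_inj (hmem P).1).mp h)
  refine ⟨hmem, ?_⟩
  by_contra! ⟨⟨Q, hQ⟩, P, hP⟩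
  -- On `P` the vertex `c₁` is reached before `c₂`, on `Q` after it: splicing the two at `c₁`
  -- gives a `v`–`w` walk avoiding `c₂`.
  have hP_pre : c₂ ∉ (P.1.takeUntil c₁ (hmem P).1).support := fun h =>
    hne P (le_antisymm hP ((P.1.mem_support_takeUntil_iff _ (hmem P).2).mp h))
  have hQ_suf : c₂ ∉ (Q.1.dropUntil c₁ (hmem Q).1).support := fun h =>
    hne Q (le_antisymm ((Q.2.mem_support_dropUntil_iff _ (hmem Q).2).mp h) hQ)
  refine hsep2 ((P.1.takeUntil c₁ (hmem P).1).append (Q.1.dropUntil c₁ (hmem Q).1)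
    |>.reachable_removeVertex_of_notMem_support ?_)
  rw [Walk.mem_support_append_iff]
  exact not_or.mpr ⟨hP_pre, hQ_suf⟩

/-- Let `G` be a connected simple graph, let `v ≠ w` be vertices, and let `c₁ ≠ c₂` be
two vertices, both distinct from `v` and `w`, each of which separates `v` from `w` in
`G`. Then every path from `v` to `w` in `G` contains both `c₁` and `c₂`, and either on
every such path `c₁` occurs before `c₂` (in the order of traversal starting from `v`),
or on every such path `c₂` occurs before `c₁`. -/
theorem separators_linearly_ordered {V : Type*} [DecidableEq V] (G : SimpleGraph V)
    (hG : G.Connected) (v w c₁ c₂ : V) (hvw : v ≠ w) (hc : c₁ ≠ c₂)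
    (h1v : c₁ ≠ v) (h1w : c₁ ≠ w) (h2v : c₂ ≠ v) (h2w : c₂ ≠ w)
    (hsep1 : ¬ (removeVertex G c₁).Reachable v w)
    (hsep2 : ¬ (removeVertex G c₂).Reachable v w) :
    (∀ P : G.Path v w, c₁ ∈ P.1.support ∧ c₂ ∈ P.1.support) ∧
    ((∀ P : G.Path v w, P.1.support.idxOf c₁ < P.1.support.idxOf c₂) ∨
     (∀ P : G.Path v w, P.1.support.idxOf c₂ < P.1.support.idxOf c₁)) :=
  separators_linearly_ordered_general G v w c₁ c₂ hc hsep1 hsep2
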